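/- arXiv:2309.07932 — 2 statements merged into one kernel-verified Lean document; each statement's English description precedes it below -/
import Mathlib

section
/- There exists a Rule 110 spaceship background of spatial period 14 and temporal period 7: there is a configuration s : ℤ → Bool with s (i + 14) = s i for all i ∈ ℤ, s not identically false, and an integer d such that applying the Rule 110 global map seven times to s yields the translated configuration i ↦ s (i + d). -/
/-- The local transition function of the Rule 110 elementary cellular automaton:
`rule110 left center right` is the new state of the cell. -/
def rule110 : Bool → Bool → Bool → Bool
  | true,  true,  true  => false
  | true,  true,  false => true
  | true,  false, true  => true
  | true,  false, false => false
  | false, true,  true  => true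
  | false, true,  false => true
  | false, false, true  => true
  | false, false, false => false

/-- The global Rule 110 map on configurations indexed by ℤ. -/
def step (s : ℤ → Bool) : ℤ → Bool :=
  fun i => rule110 (s (i - 1)) (s i) (s (i + 1))

/-!
An `n`-periodic configuration is a configuration on the cycle `ZMod n` pulled back along
`ℤ → ZMod n`, and the global map commutes with this pullback. So it suffices to exhibit one
configuration on `ZMod 14` that Rule 110 returns to itself after seven steps: Cook's ether
`11111000100110`, checked by evaluation.
-/

def stepCyclic {n : ℕ} (f : ZMod n → Bool) : ZMod n → Bool :=
  fun j => rule110 (f (j - 1)) (f j) (f (j + 1))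

theorem periodic_comp_intCast {n : ℕ} (f : ZMod n → Bool) :
    Function.Periodic (f ∘ ((↑) : ℤ → ZMod n)) n := by
  intro i
  simp

theorem semiconj_comp_intCast (n : ℕ) :
    Function.Semiconj (fun f : ZMod n → Bool => f ∘ ((↑) : ℤ → ZMod n)) stepCyclic step := by
  intro f
  funext i
  simp [step, stepCyclic]

theorem iterate_step_comp_intCast {n : ℕ} (k : ℕ) (f : ZMod n → Bool) :
    step^[k] (f ∘ ((↑) : ℤ → ZMod n)) = stepCyclic^[k] f ∘ ((↑) : ℤ → ZMod n) :=
  ((semiconj_comp_intCast n).iterate_right k f).symm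

def ether : ZMod 14 → Bool :=
  ![true, true, true, true, true, false, false, false, true, false, false, true, true, false]

theorem iterate_stepCyclic_ether : stepCyclic^[7] ether = ether := by
  decide

/-- There exists a Rule 110 spaceship background of spatial period 14 and
temporal period 7: a non-identically-false configuration of spatial period 14
which, after seven applications of the global map, is a translate of itself. -/
theorem rule110_spaceship_background :
    ∃ s : ℤ → Bool,
      (∀ i : ℤ, s (i + 14) = s i) ∧
      (¬ ∀ i : ℤ, s i = false) ∧
      (∃ d : ℤ, step^[7] s = fun i => s (i + d)) := by
  refine ⟨ether ∘ (↑), periodic_comp_intCast ether, fun h => absurd (h 0) (by decide), 0, ?_⟩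
  rw [iterate_step_comp_intCast, iterate_stepCyclic_ether]
  simp only [add_zero]
end

section
/- Let a, b, c, d, e, f be six distinct elements equipped with a strict linear order <. Assume e < d < c, e < f < a, b < c, and b < a. Assume further that any two of the pairs {a,f}, {b,c}, {d,e} are non-crossing with respect to <, and any two of the pairs {a,b}, {c,d}, {e,f} are non-crossing with respect to <. Then the linear order is exactly b < e < f < a < d < c or exactly b < e < d < c < f < a. (This is the combinatorial content of the paper's Hexagonal Folder lemma: the only flat-foldings of the hexagonal single-vertex crease pattern with region e upward-facing have layer orderings, from top to bottom, c > d > a > f > e > b or a > f > c > d > e > b.) -/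
/-- `Between x u y` means `u` lies strictly between `x` and `y` in the order. -/
def Between {α : Type*} [LinearOrder α] (x u y : α) : Prop :=
  (x < u ∧ u < y) ∨ (y < u ∧ u < x)

/-- Two disjoint unordered pairs `{x,y}` and `{u,v}` cross if exactly one of
`u`, `v` lies strictly between `x` and `y`. -/
def Crosses {α : Type*} [LinearOrder α] (x y u v : α) : Prop :=
  Xor' (Between x u y) (Between x v y)

/-!
Each non-crossing condition is applied to four points `p < q < r < s`, where the
interleaved pairs `{p, r}` and `{q, s}` cross. First `b` is the bottom layer: otherwise `e < b`, and
comparing `b` with `f`, then `a` with `c`, then `b` with `d` each time either exhibits an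
interleaving or pushes `d` into the interval `(f, a)`, where `{a, f}` and `{d, e}` would
interleave. Then `d < f` forces `c < f` (by `{c, d}` and `{e, f}`), while `f < d` forces
`a < d` (by `{a, f}` and `{d, e}`); these are the two orders of the conclusion.
-/

section LinearOrder

variable {α : Type*} [LinearOrder α] {x y u v p q r s : α}

theorem between_comm : Between x u y ↔ Between y u x :=
  or_comm

theorem Crosses.swap_left (h : Crosses x y u v) : Crosses y x u v := by
  rwa [Crosses, between_comm, between_comm (x := y)]

theorem Crosses.swap_right (h : Crosses x y u v) : Crosses x y v u :=
  Or.symm h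

theorem not_between_of_lt_of_lt (hx : x < u) (hy : y < u) : ¬ Between x u y := by
  rintro (⟨-, h⟩ | ⟨-, h⟩)
  · exact h.not_gt hy
  · exact h.not_gt hx

theorem not_between_of_gt_of_gt (hx : u < x) (hy : u < y) : ¬ Between x u y := by
  rintro (⟨h, -⟩ | ⟨h, -⟩)
  · exact h.not_gt hx
  · exact h.not_gt hy

theorem crosses_of_lt_of_lt_of_lt (hpq : p < q) (hqr : q < r) (hrs : r < s) :
    Crosses p r q s ∧ Crosses q s p r :=
  ⟨.inl ⟨.inl ⟨hpq, hqr⟩, not_between_of_lt_of_lt (hpq.trans (hqr.trans hrs)) hrs⟩,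
    .inr ⟨.inl ⟨hqr, hrs⟩, not_between_of_gt_of_gt hpq (hpq.trans (hqr.trans hrs))⟩⟩

end LinearOrder

theorem hexagonal_folder_general {α : Type*} [LinearOrder α] (a b c d e f : α)
    (hdistinct : [a, b, c, d, e, f].Pairwise (· ≠ ·))
    (hed : e < d) (hdc : d < c) (hef : e < f) (hfa : f < a)
    (hbc : b < c) (hba : b < a)
    -- taco-taco non-crossing among the pairs {a,f}, {b,c}, {d,e}
    (h1 : ¬ Crosses a f b c) (h2 : ¬ Crosses a f d e)
    -- taco-taco non-crossing among the pairs {a,b}, {c,d}, {e,f}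
    (h4 : ¬ Crosses a b c d) (h5 : ¬ Crosses a b e f) (h6 : ¬ Crosses c d e f) :
    (b < e ∧ e < f ∧ f < a ∧ a < d ∧ d < c) ∨
    (b < e ∧ e < d ∧ d < c ∧ c < f ∧ f < a) := by
  simp only [List.pairwise_cons, List.mem_cons, List.not_mem_nil, or_false,
    forall_eq_or_imp, forall_eq, List.Pairwise.nil, and_true] at hdistinct
  obtain ⟨⟨-, hac, had, -, -⟩, ⟨-, hbd, hbe, hbf⟩, ⟨-, -, hcf⟩, ⟨-, hdf⟩, -⟩ := hdistinct
  have hda (hfd : f < d) : a < d := had.lt_or_gt.resolve_right fun hda =>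
    h2 (crosses_of_lt_of_lt_of_lt hef hfd hda).2.swap_left.swap_right
  have hbe : b < e := hbe.lt_or_gt.resolve_right fun heb => by
    obtain hbf | hfb := hbf.lt_or_gt
    · exact h5 (crosses_of_lt_of_lt_of_lt heb hbf hfa).2.swap_left
    have hca : c < a := hac.lt_or_gt.resolve_left fun hac =>
      h1 (crosses_of_lt_of_lt_of_lt hfb hba hac).1.swap_left
    have hbd : b < d := hbd.lt_or_gt.resolve_right fun hdb =>
      h4 (crosses_of_lt_of_lt_of_lt hdb hbc hca).2.swap_left.swap_right
    exact (hda (hfb.trans hbd)).not_gt (hdc.trans hca)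
  obtain hdf | hfd := hdf.lt_or_gt
  · have hcf : c < f := hcf.lt_or_gt.resolve_right fun hfc =>
      h6 (crosses_of_lt_of_lt_of_lt hed hdf hfc).2.swap_left
    exact .inr ⟨hbe, hed, hdc, hcf, hfa⟩
  · exact .inl ⟨hbe, hef, hfa, hda hfd, hdc⟩

/-- The combinatorial content of the Hexagonal Folder lemma: the only layer
orderings compatible with the mountain-valley relations and the taco-taco
non-crossing conditions are `b < e < f < a < d < c` and `b < e < d < c < f < a`.
(In the paper's top-to-bottom notation: `c > d > a > f > e > b` or
`a > f > c > d > e > b`.) -/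
theorem hexagonal_folder {α : Type*} [LinearOrder α] (a b c d e f : α)
    (hdistinct : [a, b, c, d, e, f].Pairwise (· ≠ ·))
    (hed : e < d) (hdc : d < c) (hef : e < f) (hfa : f < a)
    (hbc : b < c) (hba : b < a)
    -- taco-taco non-crossing among the pairs {a,f}, {b,c}, {d,e}
    (h1 : ¬ Crosses a f b c) (h2 : ¬ Crosses a f d e) (h3 : ¬ Crosses b c d e)
    -- taco-taco non-crossing among the pairs {a,b}, {c,d}, {e,f}
    (h4 : ¬ Crosses a b c d) (h5 : ¬ Crosses a b e f) (h6 : ¬ Crosses c d e f) :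
    (b < e ∧ e < f ∧ f < a ∧ a < d ∧ d < c) ∨
    (b < e ∧ e < d ∧ d < c ∧ c < f ∧ f < a) :=
  hexagonal_folder_general a b c d e f hdistinct hed hdc hef hfa hbc hba h1 h2 h4 h5 h6
end
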